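/- (Role delegation type I, graph level.) Let P1 and P2 be disjoint sets of vertices with c1 ∈ P1 and c2 ∈ P2, and let S = S(P1, P2, c1, c2) be the binary star graph. Let G' = S − (P2 \ {c2}) be obtained by deleting all vertices of P2 other than c2, and let v ∈ P1 \ {c1}. Then τ_v(τ_{c2}(τ_v(G')) − c2) is the star graph on P1 with center v. -/

import Mathlib

open SimpleGraph

universe u

/-- Local complementation of `G` at vertex `i`: adjacency is toggled exactly among
pairs of neighbors of `i`. -/
def localComp {V : Type u} (G : SimpleGraph V) (i : V) : SimpleGraph V where
  Adj a b := a ≠ b ∧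
    ((G.Adj i a ∧ G.Adj i b) ∧ ¬ G.Adj a b ∨ ¬(G.Adj i a ∧ G.Adj i b) ∧ G.Adj a b)
  symm := by
    constructor
    rintro a b ⟨hne, h⟩
    refine ⟨hne.symm, ?_⟩
    rcases h with ⟨⟨ha, hb⟩, hab⟩ | ⟨h1, h2⟩
    · exact Or.inl ⟨⟨hb, ha⟩, fun h => hab h.symm⟩
    · exact Or.inr ⟨fun h => h1 ⟨h.2, h.1⟩, h2.symm⟩
  loopless := ⟨fun a h => h.1 rfl⟩

/-- Vertex deletion `G − i`: remove every edge incident to `i` (the vertex stays,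
isolated). -/
def delVert {V : Type u} (G : SimpleGraph V) (i : V) : SimpleGraph V where
  Adj a b := G.Adj a b ∧ a ≠ i ∧ b ≠ i
  symm := ⟨fun _ _ ⟨h, ha, hb⟩ => ⟨h.symm, hb, ha⟩⟩
  loopless := ⟨fun a h => G.loopless.irrefl a h.1⟩

/-- Deletion of a set `Z` of vertices: remove every edge incident to a vertex of `Z`. -/
def delSet {V : Type u} (G : SimpleGraph V) (Z : Set V) : SimpleGraph V where
  Adj a b := G.Adj a b ∧ a ∉ Z ∧ b ∉ Z
  symm := ⟨fun _ _ ⟨h, ha, hb⟩ => ⟨h.symm, hb, ha⟩⟩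
  loopless := ⟨fun a h => G.loopless.irrefl a h.1⟩

/-- Star graph on the set `W` with center `c`: edges are exactly the pairs `{c, u}`
for `u ∈ W \ {c}`. -/
def starGraph {V : Type u} (W : Set V) (c : V) : SimpleGraph V :=
  SimpleGraph.fromRel (fun a b => a = c ∧ b ∈ W \ {c})

/-- Complete graph on the set `A`: edges are exactly all pairs of distinct elements
of `A`. -/
def completeOn {V : Type u} (A : Set V) : SimpleGraph V :=
  SimpleGraph.fromRel (fun a b => a ∈ A ∧ b ∈ A)

/-- Complete bipartite graph on parts `A` and `B`: edges are exactly the pairs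
`{a, b}` with `a ∈ A` and `b ∈ B`. -/
def completeBipartiteOn {V : Type u} (A B : Set V) : SimpleGraph V :=
  SimpleGraph.fromRel (fun a b => a ∈ A ∧ b ∈ B)

/-- Binary star graph `S(P1, P2, c1, c2)`: edges are exactly the pairs `{c1, u}`
with `u ∈ P2` together with the pairs `{u, c2}` with `u ∈ P1`. -/
def binaryStar {V : Type u} (P1 P2 : Set V) (c1 c2 : V) : SimpleGraph V :=
  SimpleGraph.fromRel (fun a b => (a = c1 ∧ b ∈ P2) ∨ (a ∈ P1 ∧ b = c2))

/-- The graph with the single edge `{c1, c2}`. -/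
def singleEdge {V : Type u} (c1 c2 : V) : SimpleGraph V :=
  SimpleGraph.fromRel (fun a b => a = c1 ∧ b = c2)

/-!
Deleting `P2 \ {c2}` from the binary star leaves the star on `P1` centred at `c2`. In it `v` has
the single neighbour `c2`, so `τ_v` does nothing; `τ_{c2}` completes the star to the complete graph
on `P1 ∪ {c2}`; deleting `c2` leaves the complete graph on `P1`, and local complementation at a
vertex of a complete graph removes exactly the edges not incident to it, leaving the star
centred at `v`.
-/

namespace LocalComplementation

variable {V : Type u}

@[simp]
theorem localComp_adj (G : SimpleGraph V) (i a b : V) :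
    (localComp G i).Adj a b ↔ a ≠ b ∧
      ((G.Adj i a ∧ G.Adj i b) ∧ ¬ G.Adj a b ∨ ¬(G.Adj i a ∧ G.Adj i b) ∧ G.Adj a b) :=
  Iff.rfl

@[simp]
theorem delVert_adj (G : SimpleGraph V) (i a b : V) :
    (delVert G i).Adj a b ↔ G.Adj a b ∧ a ≠ i ∧ b ≠ i :=
  Iff.rfl

@[simp]
theorem delSet_adj (G : SimpleGraph V) (Z : Set V) (a b : V) :
    (delSet G Z).Adj a b ↔ G.Adj a b ∧ a ∉ Z ∧ b ∉ Z :=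
  Iff.rfl

@[simp]
theorem starGraph_adj (W : Set V) (c a b : V) :
    (starGraph W c).Adj a b ↔ a ≠ b ∧ (a = c ∧ b ∈ W ∨ b = c ∧ a ∈ W) := by
  simp only [_root_.starGraph, fromRel_adj, Set.mem_sdiff, Set.mem_singleton_iff]
  grind

@[simp]
theorem completeOn_adj (A : Set V) (a b : V) :
    (completeOn A).Adj a b ↔ a ≠ b ∧ a ∈ A ∧ b ∈ A := by
  simp only [completeOn, fromRel_adj]
  tauto

theorem localComp_eq_self {G : SimpleGraph V} {i : V} (h : (G.neighborSet i).Subsingleton) :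
    localComp G i = G := by
  ext a b
  simp only [localComp_adj]
  constructor
  · rintro ⟨hab, ⟨⟨ha, hb⟩, -⟩ | ⟨-, hadj⟩⟩
    · exact absurd (h ha hb) hab
    · exact hadj
  · intro hadj
    exact ⟨hadj.ne, Or.inr ⟨fun ⟨ha, hb⟩ => hadj.ne (h ha hb), hadj⟩⟩

theorem starGraph_neighborSet_subsingleton (W : Set V) {c u : V} (hu : u ≠ c) :
    ((starGraph W c).neighborSet u).Subsingleton :=
  Set.subsingleton_singleton.anti fun x hx => by
    simp only [mem_neighborSet, starGraph_adj, hu, false_and, false_or] at hx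
    exact hx.2.1

theorem localComp_starGraph_center (W : Set V) (c : V) :
    localComp (starGraph W c) c = completeOn (insert c W) := by
  ext a b
  simp only [localComp_adj, starGraph_adj, completeOn_adj, Set.mem_insert_iff]
  grind

theorem delVert_completeOn (A : Set V) (c : V) :
    delVert (completeOn A) c = completeOn (A \ {c}) := by
  ext a b
  simp only [delVert_adj, completeOn_adj, Set.mem_sdiff, Set.mem_singleton_iff]
  tauto

theorem localComp_completeOn {A : Set V} {v : V} (hv : v ∈ A) :
    localComp (completeOn A) v = starGraph A v := by
  ext a b
  simp only [localComp_adj, completeOn_adj, starGraph_adj]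
  grind

theorem delSet_binaryStar_eq_starGraph {P1 P2 : Set V} {c1 c2 : V} (hdisj : Disjoint P1 P2)
    (hc1 : c1 ∈ P1) :
    delSet (binaryStar P1 P2 c1 c2) (P2 \ {c2}) = starGraph P1 c2 := by
  have hP1 : ∀ x ∈ P1, x ∉ P2 := fun _ hx => Set.disjoint_left.1 hdisj hx
  ext a b
  simp only [delSet_adj, binaryStar, fromRel_adj, starGraph_adj, Set.mem_sdiff,
    Set.mem_singleton_iff]
  grind

end LocalComplementation

open LocalComplementation

/-- Role delegation type I, graph level:
with `G' = S − (P2 \ {c2})` and `v ∈ P1 \ {c1}`, `τ_v(τ_{c2}(τ_v(G')) − c2)` is the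
star graph on `P1` with center `v`. -/
theorem stmt_7 {V : Type u} (P1 P2 : Set V) (hdisj : Disjoint P1 P2)
    (c1 c2 : V) (hc1 : c1 ∈ P1) (hc2 : c2 ∈ P2) (v : V) (hv : v ∈ P1 \ {c1}) :
    localComp (delVert (localComp (localComp
        (delSet (binaryStar P1 P2 c1 c2) (P2 \ {c2})) v) c2) c2) v =
      starGraph P1 v := by
  have hc2P1 : c2 ∉ P1 := Set.disjoint_right.1 hdisj hc2
  have hv2 : v ≠ c2 := ne_of_mem_of_not_mem hv.1 hc2P1
  rw [delSet_binaryStar_eq_starGraph hdisj hc1,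
    localComp_eq_self (starGraph_neighborSet_subsingleton P1 hv2), localComp_starGraph_center,
    delVert_completeOn, Set.insert_sdiff_self_of_notMem hc2P1, localComp_completeOn hv.1]
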